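/- arXiv:2408.07012 — 3 statements merged into one kernel-verified Lean document; each statement's English description precedes it below -/
import Mathlib

section
/- Let N be a group with a descending chain of normal subgroups N = N_1 ⊇ N_2 ⊇ ... ⊇ N_{r+1} = {1} such that [N, N_k] ≤ N_{k+1} for all k, and suppose given injective homomorphisms u_i : ℝ → N (i = 1,...,r) with u_i(ℝ) ⊆ N_i, such that every element n ∈ N can be written uniquely as n = u_1(t_1)···u_r(t_r) with t_i ∈ ℝ, and for each k the coordinates t_1,...,t_k depend only on n modulo N_{k+1}. Let Γ ≤ N be the subgroup of elements with all coordinates in ℤ. Then for every n ∈ N there exists a unique γ ∈ Γ such that all coordinates of nγ lie in [−1/2, 1/2). -/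
open scoped commutatorElement

section Aux
variable {N : Type*} [Group N] {r : ℕ}

/-- product of one-parameter factors over a coordinate vector -/
def srF (u : Fin r → ℝ → N) (t : Fin r → ℝ) : N :=
  ((List.finRange r).map fun i => u i (t i)).prod

/-- truncation of a coordinate vector -/
def srTrunc (t : Fin r → ℝ) (a : ℕ) : Fin r → ℝ := fun j => if j.1 < a then t j else 0

lemma sr_mem_take {a : ℕ} {j : Fin r} (h : j ∈ (List.finRange r).take a) : j.1 < a := by
  rw [List.mem_iff_getElem] at h
  obtain ⟨i, hi, rfl⟩ := h
  have hi' : i < a := lt_of_lt_of_le hi (by simpa using List.length_take_le a (List.finRange r))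
  simp [List.getElem_take]
  omega

lemma sr_mem_drop {a : ℕ} {j : Fin r} (h : j ∈ (List.finRange r).drop a) : a ≤ j.1 := by
  rw [List.mem_iff_getElem] at h
  obtain ⟨i, hi, rfl⟩ := h
  simp [List.getElem_drop]

lemma sr_drop_cons (k : Fin r) :
    (List.finRange r).drop k.1 = k :: (List.finRange r).drop (k.1 + 1) := by
  have h : k.1 < (List.finRange r).length := by simpa using k.2
  rw [List.drop_eq_getElem_cons h]
  congr 1
  simp

end Aux

section Aux2
variable {N : Type*} [Group N] {r : ℕ}

lemma sr_anti {Nsub : ℕ → Subgroup N} (hChain : ∀ k, Nsub (k + 1) ≤ Nsub k)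
    {a b : ℕ} (h : a ≤ b) : Nsub b ≤ Nsub a := by
  induction b with
  | zero => simp_all
  | succ b ih =>
    rcases Nat.lt_or_ge a (b+1) with h' | h'
    · exact le_trans (hChain b) (ih (by omega))
    · have : a = b + 1 := by omega
      subst this; exact le_rfl

lemma sr_u0 {u : Fin r → ℝ → N} (hu : ∀ i, ∀ s t : ℝ, u i (s + t) = u i s * u i t)
    (i : Fin r) : u i 0 = 1 := by
  have := hu i 0 0
  rw [add_zero] at this
  exact (left_eq_mul.mp this)

lemma sr_list_mem {Nsub : ℕ → Subgroup N} (hChain : ∀ k, Nsub (k + 1) ≤ Nsub k)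
    {u : Fin r → ℝ → N} (humem : ∀ (i : Fin r) (t : ℝ), u i t ∈ Nsub (i.1 + 1))
    (t : Fin r → ℝ) (a : ℕ) (L : List (Fin r)) (hL : ∀ j ∈ L, a ≤ j.1 + 1) :
    (L.map fun i => u i (t i)).prod ∈ Nsub a := by
  induction L with
  | nil => exact one_mem _
  | cons x L ih =>
    simp only [List.map_cons, List.prod_cons]
    exact mul_mem (sr_anti hChain (hL x (by simp)) (humem x (t x)))
      (ih fun j hj => hL j (by simp [hj]))

/-- splitting: F t = F (trunc t a) * (tail product), tail in Nsub (a+1) -/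
lemma sr_split {u : Fin r → ℝ → N} (hu : ∀ i, ∀ s t : ℝ, u i (s + t) = u i s * u i t)
    (t : Fin r → ℝ) (a : ℕ) :
    srF u t = srF u (srTrunc t a) * (((List.finRange r).drop a).map fun i => u i (t i)).prod := by
  unfold srF
  conv_lhs => rw [← List.take_append_drop a (List.finRange r)]
  rw [List.map_append, List.prod_append]
  congr 1
  conv_rhs => rw [← List.take_append_drop a (List.finRange r)]
  rw [List.map_append, List.prod_append]
  have h1 : ((List.finRange r).take a).map (fun i => u i (srTrunc t a i))
      = ((List.finRange r).take a).map (fun i => u i (t i)) := by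
    apply List.map_congr_left
    intro j hj
    simp [srTrunc, sr_mem_take hj]
  have h2 : (((List.finRange r).drop a).map fun i => u i (srTrunc t a i)).prod = 1 := by
    apply List.prod_eq_one
    intro x hx
    simp only [List.mem_map] at hx
    obtain ⟨j, hj, rfl⟩ := hx
    have := sr_mem_drop hj
    simp [srTrunc, Nat.not_lt.mpr this, sr_u0 hu]
  rw [h1, h2, mul_one]

lemma sr_split_q {Nsub : ℕ → Subgroup N} (hChain : ∀ k, Nsub (k + 1) ≤ Nsub k)
    {u : Fin r → ℝ → N} (hu : ∀ i, ∀ s t : ℝ, u i (s + t) = u i s * u i t)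
    (humem : ∀ (i : Fin r) (t : ℝ), u i t ∈ Nsub (i.1 + 1))
    (t : Fin r → ℝ) (a : ℕ) :
    ∃ q ∈ Nsub (a + 1), srF u t = srF u (srTrunc t a) * q := by
  refine ⟨_, ?_, sr_split hu t a⟩
  exact sr_list_mem hChain humem t (a+1) _ (fun j hj => by have := sr_mem_drop hj; omega)

/-- if t vanishes above k then F t = F (trunc t k) * u k (t k) -/
lemma sr_split_k {u : Fin r → ℝ → N} (hu : ∀ i, ∀ s t : ℝ, u i (s + t) = u i s * u i t)
    (t : Fin r → ℝ) (k : Fin r) (ht : ∀ j : Fin r, k.1 < j.1 → t j = 0) :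
    srF u t = srF u (srTrunc t k.1) * u k (t k) := by
  rw [sr_split hu t k.1, sr_drop_cons k]
  simp only [List.map_cons, List.prod_cons]
  congr 1
  have : (((List.finRange r).drop (k.1+1)).map fun i => u i (t i)).prod = 1 := by
    apply List.prod_eq_one
    intro x hx
    simp only [List.mem_map] at hx
    obtain ⟨j, hj, rfl⟩ := hx
    have := sr_mem_drop hj
    rw [ht j (by omega), sr_u0 hu]
  rw [this, mul_one]

end Aux2

section Aux3
variable {N : Type*} [Group N] {r : ℕ}
  {Nsub : ℕ → Subgroup N}
  {u : Fin r → ℝ → N} {coord : N → Fin r → ℝ}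

lemma sr_coord_one
    (hu : ∀ i, ∀ s t : ℝ, u i (s + t) = u i s * u i t)
    (huniq : ∀ t : Fin r → ℝ, coord (((List.finRange r).map fun i => u i (t i)).prod) = t)
    (j : Fin r) : coord (1 : N) j = 0 := by
  have h1 : srF u (fun _ => (0:ℝ)) = 1 := by
    apply List.prod_eq_one
    intro x hx
    simp only [List.mem_map] at hx
    obtain ⟨i, _, rfl⟩ := hx
    exact sr_u0 hu i
  have := huniq (fun _ => (0:ℝ))
  rw [show (((List.finRange r).map fun i => u i 0).prod) = srF u (fun _ => (0:ℝ)) from rfl,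
    h1] at this
  exact congrFun this j

lemma sr_low
    (hdep : ∀ (n m : N) (i : Fin r), n⁻¹ * m ∈ Nsub (i.1 + 2) → coord n i = coord m i)
    (n q : N) (j : Fin r) (hq : q ∈ Nsub (j.1 + 2)) : coord (n * q) j = coord n j :=
  (hdep n (n * q) j (by simpa using hq)).symm

/-- Key lemma: right multiplication by `u k m` adds `m` to the `k`-th coordinate. -/
lemma sr_key
    (hNormal : ∀ k, (Nsub k).Normal)
    (hChain : ∀ k, Nsub (k + 1) ≤ Nsub k)
    (hu : ∀ i, ∀ s t : ℝ, u i (s + t) = u i s * u i t)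
    (humem : ∀ (i : Fin r) (t : ℝ), u i t ∈ Nsub (i.1 + 1))
    (hrepr : ∀ n : N, n = ((List.finRange r).map fun i => u i (coord n i)).prod)
    (huniq : ∀ t : Fin r → ℝ, coord (((List.finRange r).map fun i => u i (t i)).prod) = t)
    (hdep : ∀ (n m : N) (i : Fin r), n⁻¹ * m ∈ Nsub (i.1 + 2) → coord n i = coord m i)
    (n : N) (k : Fin r) (m : ℝ) :
    coord (n * u k m) k = coord n k + m := by
  set t := coord n with ht
  have hn : n = srF u t := hrepr n
  obtain ⟨q, hq, hsp⟩ := sr_split_q hChain hu humem t (k.1 + 1)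
  have h1 : srF u (srTrunc t (k.1+1)) = srF u (srTrunc t k.1) * u k (t k) := by
    have := sr_split_k hu (srTrunc t (k.1+1)) k
      (fun j hj => by simp [srTrunc, Nat.not_lt.mpr (by omega : k.1 + 1 ≤ j.1)])
    rw [this]
    congr 1
    · congr 1
      funext j
      simp only [srTrunc]
      split
      · next h => simp [show j.1 < k.1 + 1 by omega]
      · rfl
    · simp [srTrunc, k.2, Nat.lt_succ_self]
  -- n * u k m = F(trunc t k) * u k (t k + m) * q'
  set q' := (u k m)⁻¹ * q * u k m with hq'
  have hq'mem : q' ∈ Nsub (k.1 + 2) := (hNormal (k.1+2)).conj_mem' q hq (u k m)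
  have h2 : n * u k m = srF u (srTrunc t k.1) * u k (t k + m) * q' := by
    rw [hn, hsp, h1, hu k (t k) m, hq']
    group
  -- comparison element
  let t'' : Fin r → ℝ := fun j => if j.1 < k.1 then t j else if j = k then t k + m else 0
  have htk : t'' k = t k + m := by
    show (if k.1 < k.1 then t k else if k = k then t k + m else 0) = t k + m
    rw [if_neg (lt_irrefl _), if_pos rfl]
  have h3 : srF u t'' = srF u (srTrunc t k.1) * u k (t k + m) := by
    have hv : ∀ j : Fin r, k.1 < j.1 → t'' j = 0 := by
      intro j hj
      show (if j.1 < k.1 then t j else if j = k then t k + m else 0) = 0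
      rw [if_neg (by omega), if_neg (by exact fun h => by subst h; omega)]
    rw [sr_split_k hu t'' k hv, htk]
    congr 2
    funext j
    show (if j.1 < k.1 then t'' j else 0) = (if j.1 < k.1 then t j else 0)
    by_cases h : j.1 < k.1
    · rw [if_pos h, if_pos h]
      show (if j.1 < k.1 then t j else if j = k then t k + m else 0) = t j
      rw [if_pos h]
    · rw [if_neg h, if_neg h]
  have h4 : coord (srF u t'') k = coord (n * u k m) k := by
    apply hdep
    rw [h2, ← h3]
    simpa using hq'mem
  have h5 : coord (srF u t'') = t'' := huniq t''
  rw [← h4, h5, htk]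

end Aux3

section Aux4
variable {N : Type*} [Group N] {r : ℕ}
  {Nsub : ℕ → Subgroup N}
  {u : Fin r → ℝ → N} {coord : N → Fin r → ℝ}

lemma sr_F_zero (hu : ∀ i, ∀ s t : ℝ, u i (s + t) = u i s * u i t) :
    srF u (fun _ => (0:ℝ)) = (1 : N) := by
  apply List.prod_eq_one
  intro x hx
  simp only [List.mem_map] at hx
  obtain ⟨i, _, rfl⟩ := hx
  exact sr_u0 hu i

/-- Any element of `Nsub (k+1)` is `u k s` times an element of `Nsub (k+2)`. -/
lemma sr_decomp
    (hChain : ∀ k, Nsub (k + 1) ≤ Nsub k)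
    (hu : ∀ i, ∀ s t : ℝ, u i (s + t) = u i s * u i t)
    (humem : ∀ (i : Fin r) (t : ℝ), u i t ∈ Nsub (i.1 + 1))
    (hrepr : ∀ n : N, n = ((List.finRange r).map fun i => u i (coord n i)).prod)
    (huniq : ∀ t : Fin r → ℝ, coord (((List.finRange r).map fun i => u i (t i)).prod) = t)
    (hdep : ∀ (n m : N) (i : Fin r), n⁻¹ * m ∈ Nsub (i.1 + 2) → coord n i = coord m i)
    (h : N) (k : Fin r) (hh : h ∈ Nsub (k.1 + 1)) :
    ∃ q ∈ Nsub (k.1 + 2), h = u k (coord h k) * q := by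
  set c := coord h with hc
  have hc0 : ∀ j : Fin r, j.1 < k.1 → c j = 0 := by
    intro j hj
    have hmem : h⁻¹ * 1 ∈ Nsub (j.1 + 2) := by
      simpa using sr_anti hChain (by omega : j.1 + 2 ≤ k.1 + 1) (inv_mem hh)
    rw [hc, hdep h 1 j hmem]
    exact sr_coord_one hu huniq j
  obtain ⟨q, hq, hsp⟩ := sr_split_q hChain hu humem c (k.1 + 1)
  refine ⟨q, hq, ?_⟩
  have h1 : srF u (srTrunc c (k.1 + 1)) = u k (c k) := by
    rw [sr_split_k hu (srTrunc c (k.1+1)) k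
      (fun j hj => by simp [srTrunc, Nat.not_lt.mpr (by omega : k.1 + 1 ≤ j.1)])]
    have h2 : srTrunc (srTrunc c (k.1+1)) k.1 = fun _ => (0:ℝ) := by
      funext j
      simp only [srTrunc]
      by_cases hjk : j.1 < k.1
      · rw [if_pos hjk, if_pos (by omega), hc0 j hjk]
      · rw [if_neg hjk]
    rw [h2, sr_F_zero hu, one_mul]
    congr 1
    simp [srTrunc, Nat.lt_succ_self]
  rw [← h1, ← hsp]
  exact hrepr h

end Aux4

/-- Abstract size reduction (Proposition A.2): let `N` be a group with a descending
central-type chain of normal subgroups `N = N₁ ⊇ N₂ ⊇ ⋯ ⊇ N_{r+1} = 1` with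
`[N, N_k] ≤ N_{k+1}`, equipped with injective one-parameter subgroups
`u_i : ℝ → N` (`u_i(ℝ) ⊆ N_i`) giving every element unique coordinates
`n = u_1(t_1) ⋯ u_r(t_r)`, where `t_1, …, t_k` depend only on `n mod N_{k+1}`.
Then for every `n ∈ N` there is a unique `γ` with integer coordinates such that
all coordinates of `nγ` lie in `[-1/2, 1/2)`. -/
theorem size_reduction_abstract (N : Type*) [Group N] (r : ℕ)
    (Nsub : ℕ → Subgroup N)
    (hTop : Nsub 1 = ⊤) (hBot : Nsub (r + 1) = ⊥)
    (hNormal : ∀ k, (Nsub k).Normal)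
    (hChain : ∀ k, Nsub (k + 1) ≤ Nsub k)
    (hComm : ∀ k, ∀ x : N, ∀ y ∈ Nsub k, ⁅x, y⁆ ∈ Nsub (k + 1))
    (u : Fin r → ℝ → N)
    (hu : ∀ i, ∀ s t : ℝ, u i (s + t) = u i s * u i t)
    (huinj : ∀ i, Function.Injective (u i))
    (humem : ∀ (i : Fin r) (t : ℝ), u i t ∈ Nsub (i.1 + 1))
    (coord : N → Fin r → ℝ)
    (hrepr : ∀ n : N, n = ((List.finRange r).map fun i => u i (coord n i)).prod)
    (huniq : ∀ t : Fin r → ℝ,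
      coord (((List.finRange r).map fun i => u i (t i)).prod) = t)
    (hdep : ∀ (n m : N) (i : Fin r), n⁻¹ * m ∈ Nsub (i.1 + 2) → coord n i = coord m i) :
    ∀ n : N, ∃! γ : N, (∀ i, ∃ m : ℤ, coord γ i = (m : ℝ)) ∧
      ∀ i, coord (n * γ) i ∈ Set.Ico (-(1/2) : ℝ) (1/2) := by
  intro n
  -- Existence by induction on the number of reduced coordinates
  have main : ∀ a, a ≤ r → ∃ t : Fin r → ℝ,
      (∀ j, ∃ m : ℤ, t j = (m : ℝ)) ∧ (∀ j : Fin r, a ≤ j.1 → t j = 0) ∧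
      ∀ j : Fin r, j.1 < a → coord (n * srF u t) j ∈ Set.Ico (-(1/2) : ℝ) (1/2) := by
    intro a
    induction a with
    | zero =>
      exact fun _ => ⟨fun _ => 0, fun j => ⟨0, by simp⟩, fun j _ => rfl,
        fun j hj => absurd hj (Nat.not_lt_zero _)⟩
    | succ a ih =>
      intro ha
      obtain ⟨t, hint, hzero, hico⟩ := ih (by omega)
      set k : Fin r := ⟨a, by omega⟩ with hk
      set c : ℝ := coord (n * srF u t) k with hcdef
      set m : ℤ := -⌊c + 1/2⌋ with hm
      have hk1 : k.1 = a := rfl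
      refine ⟨fun j => if j = k then (m : ℝ) else t j, ?_, ?_, ?_⟩
      · intro j
        by_cases hj : j = k
        · exact ⟨m, by simp [hj]⟩
        · obtain ⟨m', hm'⟩ := hint j
          exact ⟨m', by simp [hj, hm']⟩
      · intro j hj
        have hjk : j ≠ k := fun h => by rw [h, hk1] at hj; omega
        simp only [if_neg hjk]
        exact hzero j (by omega)
      · -- product relation
        have hFt : srF u (fun j => if j = k then (m : ℝ) else t j) = srF u t * u k m := by
          have e1 : srF u t = srF u (srTrunc t k.1) := by
            rw [sr_split_k hu t k (fun j hj => hzero j (by omega)), hzero k (by simp [hk]),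
              sr_u0 hu, mul_one]
          have e2 : srF u (fun j => if j = k then (m : ℝ) else t j)
              = srF u (srTrunc t k.1) * u k m := by
            rw [sr_split_k hu _ k (fun j hj => by
              rw [if_neg (by exact fun h => by subst h; omega)]
              exact hzero j (by simp [hk] at hj ⊢; omega))]
            congr 2
            · funext j
              simp only [srTrunc]
              by_cases hjk : j.1 < k.1
              · rw [if_pos hjk, if_pos hjk, if_neg (by exact fun h => by subst h; omega)]
              · rw [if_neg hjk, if_neg hjk]
            · rw [if_pos rfl]
          rw [e1, e2]
        intro j hj
        rw [hFt, ← mul_assoc]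
        rcases Nat.lt_or_ge j.1 a with hja | hja
        · -- lower coordinates unchanged
          have : coord (n * srF u t * u k m) j = coord (n * srF u t) j :=
            sr_low hdep _ _ j (sr_anti hChain (by omega : j.1 + 2 ≤ k.1 + 1) (humem k m))
          rw [this]
          exact hico j hja
        · -- the new coordinate
          have hja' : j = k := Fin.ext (by rw [hk1]; omega)
          rw [hja']
          rw [sr_key hNormal hChain hu humem hrepr huniq hdep (n * srF u t) k m, ← hcdef]
          have h1 : (⌊c + 1/2⌋ : ℝ) ≤ c + 1/2 := Int.floor_le _
          have h2 : c + 1/2 < ⌊c + 1/2⌋ + 1 := Int.lt_floor_add_one _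
          constructor
          · push_cast [hm]; linarith
          · push_cast [hm]; linarith
  have huniq' : ∀ t : Fin r → ℝ, coord (srF u t) = t := huniq
  obtain ⟨t, hint, _, hico⟩ := main r le_rfl
  refine ⟨srF u t, ⟨?_, fun j => hico j j.2⟩, ?_⟩
  · intro j
    rw [huniq' t]; exact hint j
  · -- uniqueness
    intro γ' hcond'
    set γ : N := srF u t with hγ
    have hcondγ : (∀ i, ∃ m : ℤ, coord γ i = (m : ℝ)) ∧
        ∀ i, coord (n * γ) i ∈ Set.Ico (-(1/2) : ℝ) (1/2) := by
      constructor
      · intro j; rw [hγ, huniq' t]; exact hint j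
      · exact fun j => hico j j.2
    have step : ∀ a, a ≤ r → γ⁻¹ * γ' ∈ Nsub (a + 1) := by
      intro a
      induction a with
      | zero => intro _; rw [hTop]; exact Subgroup.mem_top _
      | succ a ih =>
        intro ha
        have hmem : γ⁻¹ * γ' ∈ Nsub (a + 1) := ih (by omega)
        set k : Fin r := ⟨a, by omega⟩ with hk
        obtain ⟨q, hq, hdec⟩ := sr_decomp hChain hu humem hrepr huniq hdep
          (γ⁻¹ * γ') k (by simpa [hk] using hmem)
        set s : ℝ := coord (γ⁻¹ * γ') k with hs
        have hpr : γ' = γ * u k s * q := by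
          rw [mul_assoc, ← hdec]; group
        have hcγ : coord γ' k = coord γ k + s := by
          rw [hpr, sr_low hdep _ _ k hq,
            sr_key hNormal hChain hu humem hrepr huniq hdep γ k s]
        have hcn : coord (n * γ') k = coord (n * γ) k + s := by
          rw [hpr, show n * (γ * u k s * q) = n * γ * u k s * q by group,
            sr_low hdep _ _ k hq,
            sr_key hNormal hChain hu humem hrepr huniq hdep (n * γ) k s]
        -- s is an integer
        obtain ⟨m₁, hm₁⟩ := hcondγ.1 k
        obtain ⟨m₂, hm₂⟩ := hcond'.1 k
        have hb1 := hcondγ.2 k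
        have hb2 := hcond'.2 k
        have hsval : s = (m₂ : ℝ) - (m₁ : ℝ) := by
          rw [hcγ, hm₁] at hm₂; linarith
        have hbounds : -(1:ℝ) < (m₂ : ℝ) - (m₁ : ℝ) ∧ ((m₂ : ℝ) - (m₁ : ℝ)) < 1 := by
          rw [← hsval]
          obtain ⟨l1, r1⟩ := hb1
          obtain ⟨l2, r2⟩ := hb2
          rw [hcn] at l2 r2
          constructor <;> linarith
        have hmeq : m₂ = m₁ := by
          have l1 : (m₂ - m₁ : ℤ) < 1 := by
            have : ((m₂ - m₁ : ℤ) : ℝ) < 1 := by push_cast; linarith [hbounds.2]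
            exact_mod_cast this
          have l2 : (-1 : ℤ) < m₂ - m₁ := by
            have : (-1 : ℝ) < ((m₂ - m₁ : ℤ) : ℝ) := by push_cast; linarith [hbounds.1]
            exact_mod_cast this
          omega
        have hs0 : s = 0 := by rw [hsval, hmeq]; ring
        rw [hdec, hs0, sr_u0 hu, one_mul]
        exact hq
    have : γ⁻¹ * γ' ∈ Nsub (r + 1) := step r le_rfl
    rw [hBot, Subgroup.mem_bot] at this
    have := inv_mul_eq_one.mp this
    exact this.symm
end

section
/- Let N be the group of upper unitriangular real g×g matrices and N(ℤ) the subgroup of integer such matrices. For every n ∈ N there exists a unique γ ∈ N(ℤ) such that every above-diagonal entry of nγ lies in [−1/2, 1/2). -/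
open Matrix

section aux

variable {g : ℕ}

/-- The recursively defined reducing matrix. -/
noncomputable def gam (n : Matrix (Fin g) (Fin g) ℝ) (i j : Fin g) : ℝ :=
  if h : i < j then
    -(round (n i j + ∑ k ∈ (Finset.Ioo i j).attach,
        n i k.1 * gam n k.1 j) : ℤ)
  else if i = j then 1 else 0
termination_by (j : ℕ) - (i : ℕ)
decreasing_by
  have hk := Finset.mem_Ioo.mp k.2
  have h1 : (i : ℕ) < (k.1 : ℕ) := hk.1
  have h2 : (k.1 : ℕ) < (j : ℕ) := hk.2
  omega

lemma gam_diag (n : Matrix (Fin g) (Fin g) ℝ) (i : Fin g) : gam n i i = 1 := by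
  rw [gam]; simp

lemma gam_low (n : Matrix (Fin g) (Fin g) ℝ) (i j : Fin g) (h : j < i) : gam n i j = 0 := by
  rw [gam]
  rw [dif_neg (by exact fun h' => absurd h (not_lt_of_gt h'))]
  rw [if_neg (by rintro rfl; exact lt_irrefl _ h)]

lemma gam_upper (n : Matrix (Fin g) (Fin g) ℝ) (i j : Fin g) (h : i < j) :
    gam n i j = -(round (n i j + ∑ k ∈ Finset.Ioo i j, n i k * gam n k j) : ℤ) := by
  rw [gam, dif_pos h, ← Finset.sum_attach (Finset.Ioo i j) (fun k => n i k * gam n k j)]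

/-- generic product-entry formula -/
lemma mul_entry (n γ : Matrix (Fin g) (Fin g) ℝ)
    (hdiag : ∀ i : Fin g, n i i = 1) (hlow : ∀ i j : Fin g, j < i → n i j = 0)
    (hγdiag : ∀ i : Fin g, γ i i = 1) (hγlow : ∀ i j : Fin g, j < i → γ i j = 0)
    {i j : Fin g} (hij : i < j) :
    (n * γ) i j = γ i j + (n i j + ∑ k ∈ Finset.Ioo i j, n i k * γ k j) := by
  rw [Matrix.mul_apply]
  have hsub : Finset.Icc i j ⊆ Finset.univ := Finset.subset_univ _
  rw [← Finset.sum_subset hsub (by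
    intro k _ hk
    rw [Finset.mem_Icc] at hk
    push_neg at hk
    by_cases h1 : i ≤ k
    · have : j < k := hk h1
      rw [hγlow k j this, mul_zero]
    · push_neg at h1
      rw [hlow i k h1, zero_mul])]
  have h1 : insert i (Finset.Ioc i j) = Finset.Icc i j := Finset.Ioc_insert_left hij.le
  have h2 : insert j (Finset.Ioo i j) = Finset.Ioc i j := Finset.Ioo_insert_right hij
  rw [← h1, Finset.sum_insert (by simp), ← h2,
    Finset.sum_insert (by simp), hdiag i, hγdiag j, one_mul, mul_one]
  try ring

lemma sub_round_mem (x : ℝ) : x - (round x : ℤ) ∈ Set.Ico (-(1/2) : ℝ) (1/2) := by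
  rw [round_eq]
  have h1 := Int.fract_nonneg (x + 1/2)
  have h2 := Int.fract_lt_one (x + 1/2)
  rw [Int.fract] at h1 h2
  constructor <;> [linarith; linarith]

/-- matrix wrapper -/
noncomputable def gamM (n : Matrix (Fin g) (Fin g) ℝ) : Matrix (Fin g) (Fin g) ℝ :=
  Matrix.of fun i j => gam n i j

lemma gamM_diag (n : Matrix (Fin g) (Fin g) ℝ) (i : Fin g) : gamM n i i = 1 := gam_diag n i

lemma gamM_low (n : Matrix (Fin g) (Fin g) ℝ) (i j : Fin g) (h : j < i) : gamM n i j = 0 :=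
  gam_low n i j h

lemma gamM_upper (n : Matrix (Fin g) (Fin g) ℝ) (i j : Fin g) (h : i < j) :
    gamM n i j = -(round (n i j + ∑ k ∈ Finset.Ioo i j, n i k * gamM n k j) : ℤ) :=
  gam_upper n i j h

end aux

/-- Size reduction for `SL_g`: for every upper unitriangular real matrix `n` there is
a unique integer upper unitriangular matrix `γ` such that every above-diagonal entry
of `nγ` lies in `[-1/2, 1/2)`. -/
theorem size_reduction_unitriangular (g : ℕ) (n : Matrix (Fin g) (Fin g) ℝ)
    (hdiag : ∀ i : Fin g, n i i = 1) (hlow : ∀ i j : Fin g, j < i → n i j = 0) :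
    ∃! γ : Matrix (Fin g) (Fin g) ℝ,
      (∀ i : Fin g, γ i i = 1) ∧ (∀ i j : Fin g, j < i → γ i j = 0) ∧
      (∀ i j : Fin g, ∃ m : ℤ, γ i j = (m : ℝ)) ∧
      (∀ i j : Fin g, i < j → (n * γ) i j ∈ Set.Ico (-(1/2) : ℝ) (1/2)) := by
  refine ⟨gamM n, ⟨gamM_diag n, gamM_low n, ?_, ?_⟩, ?_⟩
  · intro i j
    rcases lt_trichotomy i j with h | h | h
    · exact ⟨-(round (n i j + ∑ k ∈ Finset.Ioo i j, n i k * gamM n k j)), by rw [gamM_upper n i j h]; push_cast; ring⟩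
    · exact ⟨1, by rw [h, gamM_diag]; norm_num⟩
    · exact ⟨0, by rw [gamM_low n i j h]; norm_num⟩
  · intro i j hij
    rw [mul_entry n (gamM n) hdiag hlow (gamM_diag n) (gamM_low n) hij, gamM_upper n i j hij]
    have := sub_round_mem (n i j + ∑ k ∈ Finset.Ioo i j, n i k * gamM n k j)
    convert this using 1
    ring
  · rintro γ ⟨hγd, hγl, hγint, hγred⟩
    -- uniqueness by induction on j - i
    have key : ∀ d : ℕ, ∀ i j : Fin g, (j : ℕ) - (i : ℕ) ≤ d → γ i j = gamM n i j := by
      intro d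
      induction d with
      | zero =>
        intro i j hd
        rcases lt_trichotomy i j with h | h | h
        · exfalso; have : (i : ℕ) < j := h; omega
        · rw [h, hγd, gamM_diag]
        · rw [hγl i j h, gamM_low n i j h]
      | succ d ih =>
        intro i j hd
        rcases lt_trichotomy i j with h | h | h
        · have hsum : ∑ k ∈ Finset.Ioo i j, n i k * γ k j
              = ∑ k ∈ Finset.Ioo i j, n i k * gamM n k j := by
            apply Finset.sum_congr rfl
            intro k hk
            rw [Finset.mem_Ioo] at hk
            have h1 : (i : ℕ) < k := hk.1
            have h2 : (k : ℕ) < j := hk.2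
            rw [ih k j (by omega)]
          have e1 := mul_entry n γ hdiag hlow hγd hγl h
          have e2 := mul_entry n (gamM n) hdiag hlow (gamM_diag n) (gamM_low n) h
          have m1 := hγred i j h
          have m2 : (n * gamM n) i j ∈ Set.Ico (-(1/2) : ℝ) (1/2) := by
            rw [e2, gamM_upper n i j h]
            have := sub_round_mem (n i j + ∑ k ∈ Finset.Ioo i j, n i k * gamM n k j)
            convert this using 1
            ring
          obtain ⟨m, hm⟩ := hγint i j
          have hgint : ∃ m' : ℤ, gamM n i j = (m' : ℝ) := ⟨-(round (n i j + ∑ k ∈ Finset.Ioo i j, n i k * gamM n k j)), by rw [gamM_upper n i j h]; push_cast; ring⟩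
          obtain ⟨m', hm'⟩ := hgint
          -- difference
          have hdiff : γ i j - gamM n i j = (n * γ) i j - (n * gamM n) i j := by
            rw [e1, e2, hsum]; ring
          obtain ⟨l1, r1⟩ := m1
          obtain ⟨l2, r2⟩ := m2
          have habs : |γ i j - gamM n i j| < 1 := by
            rw [hdiff, abs_lt]; constructor <;> linarith
          rw [hm, hm'] at habs
          rw [abs_lt] at habs
          have hl : (-1 : ℝ) < ((m - m' : ℤ) : ℝ) := by push_cast; linarith [habs.1]
          have hr : ((m - m' : ℤ) : ℝ) < 1 := by push_cast; linarith [habs.2]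
          have hl' : (-1 : ℤ) < m - m' := by exact_mod_cast hl
          have hr' : m - m' < 1 := by exact_mod_cast hr
          have : m = m' := by omega
          rw [hm, hm', this]
        · rw [h, hγd, gamM_diag]
        · rw [hγl i j h, gamM_low n i j h]
    ext i j
    exact key ((j : ℕ) - (i : ℕ)) i j le_rfl
end

section
/- Let δ ∈ (1/4,1), let t ∈ ℝ with |t| ≤ 1/2, and let a > 0. Define the sequence a_0 = a and, as long as a_k² > (δ − t_k²)^{-1} for some t_k ∈ [−1/2,1/2], set a_{k+1} = (1 + t_k² a_k²)/a_k. Then a_{k+1} < δ a_k at every step, so a_k < δ^k a_0, and consequently if the values a_k are bounded below by some c > 0, the iteration stops after fewer than log(a_0/c)/log(1/δ) steps. -/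
/-- Termination of the reduction iteration: if `a 0 > 0`, `|t k| ≤ 1/2`, and at each
step `k < K` the Lovász test fails (`(a k)² > (δ - (t k)²)⁻¹`) and
`a (k+1) = (1 + (t k)²(a k)²)/(a k)`, then `a (k+1) < δ · a k` at every step, hence
`a k ≤ δ^k · a 0` (strictly for `k > 0`), and if the values `a k` are bounded below
by `c > 0` then `K < log(a 0 / c) / log δ⁻¹` (for `K > 0`). -/
theorem reduction_iteration_terminates (δ : ℝ) (hδ : δ ∈ Set.Ioo (1/4 : ℝ) 1)
    (a t : ℕ → ℝ) (ha0 : 0 < a 0) (ht : ∀ k, |t k| ≤ 1/2) (K : ℕ)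
    (hfail : ∀ k < K, (a k) ^ 2 > (δ - (t k) ^ 2)⁻¹)
    (hrec : ∀ k < K, a (k + 1) = (1 + (t k) ^ 2 * (a k) ^ 2) / a k) :
    (∀ k < K, a (k + 1) < δ * a k) ∧
    (∀ k ≤ K, a k ≤ δ ^ k * a 0) ∧
    (∀ k ≤ K, 0 < k → a k < δ ^ k * a 0) ∧
    (∀ c : ℝ, 0 < c → (∀ k ≤ K, c ≤ a k) → 0 < K →
      (K : ℝ) < Real.log (a 0 / c) / Real.log δ⁻¹) := by
  obtain ⟨hδ1, hδ2⟩ := hδ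
  have hδ0 : 0 < δ := lt_trans (by norm_num) hδ1
  have hpos : ∀ k ≤ K, 0 < a k := by
    intro k hk
    induction k with
    | zero => exact ha0
    | succ n ih =>
      have hn : n < K := hk
      have hn' := ih hn.le
      rw [hrec n hn]
      have h2 : (0:ℝ) ≤ (t n) ^ 2 * (a n) ^ 2 := by positivity
      have : (0:ℝ) < 1 + (t n) ^ 2 * (a n) ^ 2 := by linarith
      positivity
  have hstep : ∀ k < K, a (k + 1) < δ * a k := by
    intro k hk
    have hak : 0 < a k := hpos k hk.le
    have ht2 : (t k) ^ 2 ≤ 1 / 4 := by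
      nlinarith [sq_abs (t k), ht k, abs_nonneg (t k)]
    have hdt : 0 < δ - (t k) ^ 2 := by linarith
    have hf := hfail k hk
    have h1 : 1 < (δ - (t k) ^ 2) * (a k) ^ 2 := by
      nlinarith [mul_lt_mul_of_pos_left hf hdt, mul_inv_cancel₀ hdt.ne']
    rw [hrec k hk, div_lt_iff₀ hak]
    nlinarith
  have hle : ∀ k ≤ K, a k ≤ δ ^ k * a 0 := by
    intro k hk
    induction k with
    | zero => simp
    | succ n ih =>
      have hn : n < K := hk
      have := hstep n hn
      have h2 := mul_le_mul_of_nonneg_left (ih hn.le) hδ0.le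
      calc a (n + 1) ≤ δ * (δ ^ n * a 0) := by linarith
        _ = δ ^ (n + 1) * a 0 := by ring
  have hlt : ∀ k ≤ K, 0 < k → a k < δ ^ k * a 0 := by
    intro k hk hk0
    obtain ⟨n, rfl⟩ := Nat.exists_eq_succ_of_ne_zero hk0.ne'
    have hn : n < K := hk
    calc a (n + 1) < δ * a n := hstep n hn
      _ ≤ δ * (δ ^ n * a 0) := mul_le_mul_of_nonneg_left (hle n hn.le) hδ0.le
      _ = δ ^ (n + 1) * a 0 := by ring
  refine ⟨hstep, hle, hlt, ?_⟩
  intro c hc hcb hK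
  have hcK : c < δ ^ K * a 0 := lt_of_le_of_lt (hcb K le_rfl) (hlt K le_rfl hK)
  have hlog : Real.log c < Real.log (δ ^ K * a 0) := Real.log_lt_log hc hcK
  rw [Real.log_mul (by positivity) ha0.ne', Real.log_pow] at hlog
  have hlδ : Real.log δ < 0 := Real.log_neg hδ0 hδ2
  have hLinv : Real.log δ⁻¹ = -Real.log δ := Real.log_inv δ
  have hLpos : 0 < Real.log δ⁻¹ := by rw [hLinv]; linarith
  rw [lt_div_iff₀ hLpos, hLinv]
  have hdiv : Real.log (a 0 / c) = Real.log (a 0) - Real.log c :=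
    Real.log_div ha0.ne' hc.ne'
  rw [hdiv]
  nlinarith
end
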